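/- (Proposition 1 pointwise inequalities) Fix ρ > 0 and K ≥ 2. For scoring vectors u, v ∈ ℝ^K with zero coordinate sums, let h(u) = argmax_k u_k and let y ∈ {1,…,K}. Then (i) 𝟙[h(u) ≠ y] ≤ L^ρ(v, y) + Φ_{ρ/2}(μ_{h(v)}(v, h(u))), and (ii) Φ_{ρ/2}(μ_{h(v)}(v, h(u))) ≤ L^ρ(u, y) + L^ρ(v, y), where L^ρ(w, y) = ∑_{k=1}^K Φ_ρ(μ_k(w, y)). -/
import Mathlib


open MeasureTheory Finset

/-- The ramp loss with margin `ρ`. -/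
noncomputable def ramp (ρ x : ℝ) : ℝ :=
  if ρ ≤ x then 0 else if x ≤ 0 then 1 else 1 - x / ρ

/-- The absolute margin function: `margin w y k = w k` if `k = y`, else `-w k`. -/
def margin {K : ℕ} (w : Fin K → ℝ) (y k : Fin K) : ℝ :=
  if k = y then w k else -w k

/-- Entrywise L1 distance between the matrices of absolute margin violations
`M^ρ(u)` and `M^ρ(v)`, where `M^ρ_{i,j}(w) = Φ_ρ(μ_i(w,j))`. -/
noncomputable def l1diff (ρ : ℝ) {K : ℕ} (u v : Fin K → ℝ) : ℝ :=
  ∑ i : Fin K, ∑ j : Fin K, |ramp ρ (margin u j i) - ramp ρ (margin v j i)|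

/-- The margin-based multi-class loss `L^ρ(w, y) = ∑_k Φ_ρ(μ_k(w,y))`. -/
noncomputable def Lmargin (ρ : ℝ) {K : ℕ} (w : Fin K → ℝ) (y : Fin K) : ℝ :=
  ∑ k : Fin K, ramp ρ (margin w y k)

lemma ramp_nonneg {ρ : ℝ} (hρ : 0 < ρ) (x : ℝ) : 0 ≤ ramp ρ x := by
  unfold ramp
  split_ifs with h1 h2
  · exact le_refl 0
  · norm_num
  · push_neg at h1 h2
    have : x / ρ ≤ 1 := (div_le_one hρ).2 h1.le
    linarith

lemma ramp_le_one {ρ : ℝ} (hρ : 0 < ρ) (x : ℝ) : ramp ρ x ≤ 1 := by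
  unfold ramp
  split_ifs with h1 h2
  · norm_num
  · norm_num
  · push_neg at h1 h2
    have : 0 ≤ x / ρ := div_nonneg h2.le hρ.le
    linarith

lemma ramp_of_nonpos {ρ x : ℝ} (hρ : 0 < ρ) (hx : x ≤ 0) : ramp ρ x = 1 := by
  unfold ramp
  rw [if_neg (by linarith), if_pos hx]

lemma ramp_mono_rho {ρ' ρ x : ℝ} (hρ' : 0 < ρ') (h : ρ' ≤ ρ) :
    ramp ρ' x ≤ ramp ρ x := by
  have hρ : 0 < ρ := lt_of_lt_of_le hρ' h
  rcases le_or_gt x 0 with hx | hx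
  · rw [ramp_of_nonpos hρ' hx, ramp_of_nonpos hρ hx]
  · rcases le_or_gt ρ' x with hx' | hx'
    · calc ramp ρ' x = 0 := by rw [ramp]; rw [if_pos hx']
        _ ≤ ramp ρ x := ramp_nonneg hρ x
    · have hx'' : ¬ ρ ≤ x ∨ True := Or.inr trivial
      rw [ramp, ramp, if_neg (not_le.2 hx'), if_neg (not_le.2 hx),
        if_neg (not_le.2 (lt_of_lt_of_le hx' h)), if_neg (not_le.2 hx)]
      have : x / ρ ≤ x / ρ' := by gcongr
      linarith

/-- The maximal coordinate of a zero-sum vector is nonnegative. -/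
lemma max_nonneg_of_sum_zero {K : ℕ} (hK : 0 < K) {w : Fin K → ℝ}
    (hw : ∑ k : Fin K, w k = 0) {iw : Fin K} (hiw : ∀ k : Fin K, w k ≤ w iw) :
    0 ≤ w iw := by
  by_contra hneg
  push_neg at hneg
  have : ∑ k : Fin K, w k < ∑ _k : Fin K, (0 : ℝ) := by
    apply Finset.sum_lt_sum_of_nonempty
    · exact Finset.univ_nonempty_iff.2 ⟨⟨0, hK⟩⟩
    · exact fun k _ => lt_of_le_of_lt (hiw k) hneg
  simp [hw] at this

/-- A single ramp term bounds into `Lmargin`. -/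
lemma ramp_le_Lmargin {ρ : ℝ} (hρ : 0 < ρ) {K : ℕ} (w : Fin K → ℝ) (y k : Fin K) :
    ramp ρ (margin w y k) ≤ Lmargin ρ w y :=
  Finset.single_le_sum (fun j _ => ramp_nonneg hρ (margin w y j)) (Finset.mem_univ k)

/-- If the argmax differs from the label, the margin loss is at least 1. -/
lemma one_le_Lmargin {ρ : ℝ} (hρ : 0 < ρ) {K : ℕ} (hK : 0 < K) {w : Fin K → ℝ}
    (hw : ∑ k : Fin K, w k = 0) {iw : Fin K} (hiw : ∀ k : Fin K, w k ≤ w iw)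
    {y : Fin K} (hne : iw ≠ y) : 1 ≤ Lmargin ρ w y := by
  have h0 : 0 ≤ w iw := max_nonneg_of_sum_zero hK hw hiw
  have : ramp ρ (margin w y iw) = 1 := by
    rw [margin, if_neg hne]
    exact ramp_of_nonpos hρ (by linarith)
  calc (1:ℝ) = ramp ρ (margin w y iw) := this.symm
    _ ≤ Lmargin ρ w y := ramp_le_Lmargin hρ w y iw

lemma Lmargin_nonneg {ρ : ℝ} (hρ : 0 < ρ) {K : ℕ} (w : Fin K → ℝ) (y : Fin K) :
    0 ≤ Lmargin ρ w y :=
  Finset.sum_nonneg fun k _ => ramp_nonneg hρ _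

theorem prop1_pointwise {K : ℕ} (hK : 2 ≤ K) (ρ : ℝ) (hρ : 0 < ρ)
    (u v : Fin K → ℝ) (hu : ∑ k : Fin K, u k = 0) (hv : ∑ k : Fin K, v k = 0)
    (iu iv : Fin K) (hiu : ∀ k : Fin K, u k ≤ u iu) (hiv : ∀ k : Fin K, v k ≤ v iv)
    (y : Fin K) :
    (if iu ≠ y then (1 : ℝ) else 0) ≤
        Lmargin ρ v y + ramp (ρ / 2) (margin v iu iv) ∧
    ramp (ρ / 2) (margin v iu iv) ≤ Lmargin ρ u y + Lmargin ρ v y := by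
  have hK0 : 0 < K := by omega
  have hρ2 : 0 < ρ / 2 := by linarith
  have hv0 : 0 ≤ v iv := max_nonneg_of_sum_zero hK0 hv hiv
  have hLv := Lmargin_nonneg hρ v y
  have hLu := Lmargin_nonneg hρ u y
  have hr0 := ramp_nonneg hρ2 (margin v iu iv)
  have hr1 := ramp_le_one hρ2 (margin v iu iv)
  constructor
  · split_ifs with hne
    · -- iu ≠ y
      by_cases hvi : iv = iu
      · subst hvi
        rw [margin, if_pos rfl]
        rcases le_or_gt (v iv) 0 with h | h
        · rw [ramp_of_nonpos hρ2 h]; linarith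
        · have : (1:ℝ) = ramp ρ (margin v y iv) := by
            rw [margin, if_neg hne, ramp_of_nonpos hρ (by linarith)]
          have h2 := ramp_le_Lmargin hρ v y iv
          have h3 := ramp_nonneg hρ2 (v iv)
          linarith
      · rw [margin, if_neg hvi, ramp_of_nonpos hρ2 (by linarith)]
        linarith
    · linarith
  · by_cases hvi : iv = iu
    · subst hvi
      by_cases hy : iv = y
      · subst hy
        have h1 : ramp (ρ/2) (margin v iv iv) ≤ ramp ρ (margin v iv iv) :=
          ramp_mono_rho hρ2 (by linarith)
        have h2 := ramp_le_Lmargin hρ v iv iv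
        linarith
      · have := one_le_Lmargin hρ hK0 hv hiv hy
        linarith
    · -- iu ≠ iv : one of them differs from y
      have hne : iu ≠ y ∨ iv ≠ y := by
        by_contra h
        push_neg at h
        exact hvi (h.2.trans h.1.symm)
      rcases hne with h | h
      · have := one_le_Lmargin hρ hK0 hu hiu h
        linarith
      · have := one_le_Lmargin hρ hK0 hv hiv h
        linarith
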